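/- arXiv:2204.10343 — 3 statements merged into one kernel-verified Lean document; each statement's English description precedes it below -/
import Mathlib

section
/- For a word v = v_1...v_l of length l with distinct letters and a positive integer n, the coefficient of the word v_1^n v_2^n ... v_l^n in the n-fold shuffle product v ⧢ ... ⧢ v equals (n!)^l. -/
/-- The shuffle product of two words, as a multiset of interleavings. -/
def shuffle {α : Type*} : List α → List α → Multiset (List α)
  | [], ys => {ys}
  | x :: xs, [] => {x :: xs}
  | x :: xs, y :: ys =>
      ((shuffle xs (y :: ys)).map (x :: ·)) + ((shuffle (x :: xs) ys).map (y :: ·))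
termination_by xs ys => xs.length + ys.length

/-- The `n`-fold shuffle power `v ⧢ v ⧢ ⋯ ⧢ v` of a word `v`. -/
def shufflePow {α : Type*} (v : List α) : ℕ → Multiset (List α)
  | 0 => {[]}
  | n + 1 => (shufflePow v n).bind (shuffle v)

lemma count_cons_map {α : Type*} [DecidableEq α] (a x : α) (z : List α) (M : Multiset (List α)) :
    Multiset.count (x :: z) (M.map (a :: ·)) = if a = x then Multiset.count z M else 0 := by
  split_ifs with h
  · subst h; exact Multiset.count_map_eq_count' _ _ (fun l1 l2 h => by injection h) _
  · rw [Multiset.count_eq_zero]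
    intro hmem
    obtain ⟨b, _, hb⟩ := Multiset.mem_map.1 hmem
    injection hb with h1 h2
    exact h h1

lemma perm_of_mem_shuffle {α : Type*} : ∀ (u w z : List α), z ∈ shuffle u w → z.Perm (u ++ w) := by
  intro u w
  induction u, w using shuffle.induct with
  | case1 ys => intro z hz; simp [shuffle] at hz; simp [hz]
  | case2 x xs => intro z hz; simp [shuffle] at hz; simp [hz]
  | case3 x xs y ys ih1 ih2 =>
    intro z hz
    rw [shuffle] at hz
    rcases Multiset.mem_add.1 hz with h | h <;> obtain ⟨b, hb, rfl⟩ := Multiset.mem_map.1 h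
    · exact (ih1 b hb).cons x
    · exact ((ih2 b hb).cons y).trans List.perm_middle.symm

lemma mem_of_mem_T {α : Type*} {x : α} {u : List α} {n : ℕ}
    (h : x ∈ u.flatMap fun y => List.replicate n y) : x ∈ u := by
  obtain ⟨y, hy, hx⟩ := List.mem_flatMap.1 h
  rwa [List.eq_of_mem_replicate hx]

lemma count_T_eq_zero {α : Type*} [DecidableEq α] {x : α} {u : List α} (n : ℕ) (hx : x ∉ u) :
    (u.flatMap fun y => List.replicate n y).count x = 0 :=
  List.count_eq_zero.2 fun h => hx (mem_of_mem_T h)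

lemma length_T {α : Type*} (u : List α) (n : ℕ) :
    (u.flatMap fun y => List.replicate n y).length = n * u.length := by
  induction u with
  | nil => simp
  | cons y u ih => simp [ih]; ring

lemma T_one {α : Type*} (u : List α) : (u.flatMap fun y => List.replicate 1 y) = u := by
  induction u with
  | nil => simp
  | cons y u ih => simp [ih]

theorem lemB {α : Type*} [DecidableEq α] (n : ℕ) (x : α) (u : List α) (a b : ℕ) (w : List α)
    (hu : u.Nodup) (hx : x ∉ u) :
    Multiset.count (List.replicate a x ++ u.flatMap fun y => List.replicate (n+1) y)
      (shuffle (List.replicate b x ++ u) w)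
    = a.choose b *
      if w = List.replicate (a - b) x ++ u.flatMap (fun y => List.replicate n y)
      then (n+1) ^ u.length else 0 := by
  rcases Nat.lt_or_ge a b with hab | hab
  · -- b > a : both sides zero
    rw [Nat.choose_eq_zero_of_lt hab, Nat.zero_mul, Multiset.count_eq_zero]
    intro hmem
    have hp := (perm_of_mem_shuffle _ _ _ hmem).count_eq x
    simp [List.count_append, List.count_replicate_self, count_T_eq_zero _ hx,
      List.count_eq_zero_of_not_mem hx] at hp
    omega
  · cases b with
    | zero =>
      cases u with
      | nil =>
        simp only [List.replicate_zero, List.nil_append, List.flatMap_nil, List.append_nil]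
        rw [shuffle]
        simp [Multiset.count_singleton, eq_comm]
      | cons y u' =>
        simp only [List.nodup_cons] at hu
        have hxy : x ≠ y := fun h => hx (h ▸ (List.mem_cons_self : y ∈ y :: u'))
        have hxu' : x ∉ u' := fun h => hx (List.mem_cons_of_mem _ h)
        cases a with
        | zero =>
          have key := lemB n y u' (n+1) 1 w hu.2 hu.1
          simp only [List.replicate_one, List.singleton_append] at key
          simp only [List.replicate_zero, List.nil_append, List.flatMap_cons, Nat.choose_self,
            Nat.sub_zero, Nat.one_mul, Nat.choose_one_right] at key ⊢
          simp only [Nat.add_sub_cancel] at key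
          rw [key, mul_ite, mul_zero, List.length_cons, pow_succ, Nat.mul_comm]
        | succ a' =>
          cases w with
          | nil =>
            simp only [List.replicate_zero, List.nil_append, List.replicate_succ,
              List.cons_append]
            rw [shuffle]
            simp [Multiset.count_singleton, hxy]
          | cons z w' =>
            simp only [List.replicate_zero, List.nil_append, List.replicate_succ,
              List.cons_append]
            rw [shuffle, Multiset.count_add, count_cons_map, count_cons_map,
              if_neg (fun h => hxy h.symm)]
            by_cases hzx : z = x
            · rw [if_pos hzx]
              have key := lemB n x (y :: u') a' 0 w' (List.nodup_cons.2 hu) hx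
              simp only [List.replicate_succ, List.replicate_zero, List.nil_append,
                List.cons_append] at key
              rw [key]
              simp [List.replicate_succ, hzx]
            · rw [if_neg hzx]
              simp [List.replicate_succ, hzx]
    | succ b' =>
      cases a with
      | zero => omega
      | succ a' =>
        have e1 : List.replicate (b'+1) x ++ u = x :: (List.replicate b' x ++ u) := by
          rw [List.replicate_succ]; rfl
        have e2 : List.replicate (a'+1) x ++ (u.flatMap fun y => List.replicate (n+1) y)
            = x :: (List.replicate a' x ++ u.flatMap fun y => List.replicate (n+1) y) := by
          rw [List.replicate_succ]; rfl
        rw [e1, e2]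
        cases w with
        | nil =>
          rw [shuffle, Multiset.count_singleton]
          by_cases hC : List.replicate a' x ++ (u.flatMap fun y => List.replicate (n+1) y)
              = List.replicate b' x ++ u
          · have hcount := congrArg (List.count x) hC
            simp only [List.count_append, List.count_replicate_self,
              count_T_eq_zero _ hx, List.count_eq_zero_of_not_mem hx, Nat.add_zero] at hcount
            have hlen := congrArg List.length hC
            simp only [List.length_append, List.length_replicate, length_T] at hlen
            rw [Nat.succ_mul] at hlen
            have hnu : n * u.length = 0 := by omega
            subst hcount
            rw [if_pos (by rw [hC]), Nat.choose_self, Nat.sub_self, List.replicate_zero,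
              List.nil_append]
            have hTn : (u.flatMap fun y => List.replicate n y) = [] :=
              List.eq_nil_of_length_eq_zero (by rw [length_T]; omega)
            rw [if_pos hTn.symm]
            rcases Nat.mul_eq_zero.1 hnu with h | h
            · simp [h]
            · simp [h]
          · rw [if_neg (by simpa using hC)]
            by_cases hD : ([] : List α)
                = List.replicate (a' + 1 - (b' + 1)) x ++ u.flatMap fun y => List.replicate n y
            · exfalso
              rw [Nat.succ_sub_succ] at hD
              have h1 : List.replicate (a' - b') x = ([] : List α) ∧
                  (u.flatMap fun y => List.replicate n y) = [] :=
                List.append_eq_nil_iff.1 hD.symm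
              have ha'b' : a' = b' := by
                have := congrArg List.length h1.1
                simp only [List.length_replicate, List.length_nil] at this
                omega
              have hlen2 := congrArg List.length h1.2
              simp only [length_T, List.length_nil] at hlen2
              apply hC
              subst ha'b'
              congr 1
              rcases Nat.mul_eq_zero.1 hlen2 with h | h
              · subst h
                rw [T_one]
              · rw [List.length_eq_zero_iff] at h
                subst h
                simp
            · rw [if_neg hD, Nat.mul_zero]
        | cons z w' =>
          rw [shuffle, Multiset.count_add, count_cons_map, count_cons_map, if_pos rfl,
            lemB n x u a' b' (z :: w') hu hx]
          by_cases hzx : z = x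
          · rw [if_pos hzx]
            have k2 := lemB n x u a' (b'+1) w' hu hx
            rw [e1] at k2
            rw [k2, Nat.succ_sub_succ, Nat.choose_succ_succ, Nat.add_mul]
            congr 1
            by_cases hba : b' + 1 ≤ a'
            · have hrep : a' - b' = (a' - (b' + 1)) + 1 := by omega
              rw [hrep, List.replicate_succ, List.cons_append]
              subst hzx
              simp only [List.cons.injEq, true_and]
            · rw [Nat.choose_eq_zero_of_lt (by omega), Nat.zero_mul, Nat.zero_mul]
          · rw [if_neg hzx, Nat.add_zero, Nat.succ_sub_succ, Nat.choose_succ_succ, Nat.add_mul]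
            by_cases hC : z :: w'
                = List.replicate (a' - b') x ++ u.flatMap fun y => List.replicate n y
            · have hle : a' < b' + 1 := by
                by_contra hge
                have hrep : a' - b' = (a' - (b' + 1)) + 1 := by omega
                rw [hrep, List.replicate_succ, List.cons_append] at hC
                exact hzx (List.cons_eq_cons.1 hC).1
              rw [Nat.choose_eq_zero_of_lt hle, Nat.zero_mul]
              simp
            · rw [if_neg hC, Nat.mul_zero, Nat.mul_zero, Nat.add_zero]
termination_by (u.length, a + w.length)
decreasing_by all_goals (subst_vars; decreasing_tactic)

lemma T_zero {α : Type*} (u : List α) : (u.flatMap fun y => List.replicate 0 y) = [] := by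
  induction u with
  | nil => simp
  | cons y u ih => simp [ih]

lemma key_count {α : Type*} [DecidableEq α] (v : List α) (hv : v.Nodup) (n : ℕ) (w : List α) :
    Multiset.count (v.flatMap fun y => List.replicate (n+1) y) (shuffle v w)
    = if w = v.flatMap fun y => List.replicate n y then (n+1) ^ v.length else 0 := by
  cases v with
  | nil =>
    rw [shuffle]
    simp [Multiset.count_singleton, eq_comm]
  | cons x u =>
    simp only [List.nodup_cons] at hv
    have h := lemB n x u (n+1) 1 w hv.2 hv.1
    simp only [List.replicate_one, List.singleton_append, Nat.add_sub_cancel] at h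
    rw [List.flatMap_cons, h, Nat.choose_one_right, mul_ite, mul_zero, List.flatMap_cons,
      List.length_cons, pow_succ, Nat.mul_comm ((n+1) ^ u.length)]

lemma sum_map_ite {β : Type*} [DecidableEq β] (s : Multiset β) (a : β) (c : ℕ) :
    (s.map fun b => if b = a then c else 0).sum = c * s.count a := by
  induction s using Multiset.induction_on with
  | empty => simp
  | cons b s ih =>
    simp only [Multiset.map_cons, Multiset.sum_cons, ih, Multiset.count_cons]
    rw [Nat.mul_add]
    by_cases h : b = a
    · simp [h, Nat.add_comm]
    · simp [h, Ne.symm h]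

theorem main_aux {α : Type*} [DecidableEq α] (v : List α) (hv : v.Nodup) :
    ∀ n : ℕ, Multiset.count (v.flatMap fun y => List.replicate n y) (shufflePow v n)
      = n.factorial ^ v.length
  | 0 => by simp [shufflePow, T_zero]
  | (n+1) => by
    rw [shufflePow, Multiset.count_bind,
      Multiset.map_congr rfl (fun w _ => key_count v hv n w), sum_map_ite,
      main_aux v hv n, Nat.factorial_succ, Nat.mul_pow]

/-- For a word `v` of length `l` with distinct letters, the coefficient of the word
`v₁ⁿ v₂ⁿ ⋯ v_lⁿ` in the `n`-fold shuffle power of `v` equals `(n!)^l`. -/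
theorem coeff_shufflePow_replicate {α : Type*} [DecidableEq α] (v : List α)
    (hv : v.Nodup) (n : ℕ) (hn : 1 ≤ n) :
    Multiset.count (v.flatMap fun x => List.replicate n x) (shufflePow v n) =
      n.factorial ^ v.length := by
  exact main_aux v hv n
end

section
/- The complex moments of the Kotz-like probability density f(z) = (l!)²/(lπ) · exp(−|l! z|^{2/l}) · |l! z|^{2(1/l − 1)} on ℂ are given by m_{k₁,k₂} = ∫_ℂ z^{k₁} \bar{z}^{k₂} f(z) dA(z) = δ_{k₁ = k₂} · (l k₁)!/(l!)^{2k₁}, for all nonnegative integers k₁, k₂ and positive integer l. -/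
open MeasureTheory Real
open Set



lemma kotz_radial (l k : ℕ) (hl : 0 < l) :
    ∫ r in Ioi (0:ℝ), r ^ (2*k+1) * Real.exp (-(((l.factorial : ℝ)*r) ^ ((2:ℝ)/l)))
      * ((l.factorial : ℝ)*r) ^ (2*((1:ℝ)/l - 1))
    = (l : ℝ)/2 * (l*k).factorial / (l.factorial : ℝ) ^ (2*k+2) := by
  set c : ℝ := (l.factorial : ℝ) with hcdef
  have hc : (0:ℝ) < c := by positivity
  have hl' : (0:ℝ) < l := by positivity
  set s : ℝ := 2*k + 2/l - 1 with hsdef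
  -- Step 1: rewrite integrand
  have step1 : ∫ r in Ioi (0:ℝ), r ^ (2*k+1) * Real.exp (-((c*r) ^ ((2:ℝ)/l)))
      * (c*r) ^ (2*((1:ℝ)/l - 1))
      = ∫ r in Ioi (0:ℝ), (c ^ (2*k+1))⁻¹ * ((c*r) ^ s * Real.exp (-((c*r) ^ ((2:ℝ)/l)))) := by
    apply setIntegral_congr_fun measurableSet_Ioi
    intro r hr
    have hr : (0:ℝ) < r := hr
    have hcr : (0:ℝ) < c * r := by positivity
    have h1 : (c*r) ^ s = (c*r) ^ ((2*k+1 : ℕ) : ℝ) * (c*r) ^ (2*((1:ℝ)/l - 1)) := by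
      rw [← Real.rpow_add hcr]
      congr 1
      rw [hsdef]
      push_cast
      field_simp
      ring
    have h2 : (c*r) ^ ((2*k+1 : ℕ) : ℝ) = c ^ (2*k+1) * r ^ (2*k+1) := by
      rw [Real.rpow_natCast, mul_pow]
    dsimp only
    rw [h1, h2]
    field_simp
  rw [step1, integral_const_mul]
  -- Step 2: scaling
  have step2 : ∫ r in Ioi (0:ℝ), (c*r) ^ s * Real.exp (-((c*r) ^ ((2:ℝ)/l)))
      = c⁻¹ * ∫ x in Ioi (0:ℝ), x ^ s * Real.exp (-(x ^ ((2:ℝ)/l))) := by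
    have := integral_comp_mul_left_Ioi (fun x : ℝ => x ^ s * Real.exp (-(x ^ ((2:ℝ)/l)))) 0 hc
    simpa [mul_zero, smul_eq_mul] using this
  rw [step2]
  -- Step 3: rpow substitution
  have hp : ((l:ℝ)/2) ≠ 0 := by positivity
  have step3 : ∫ x in Ioi (0:ℝ), x ^ s * Real.exp (-(x ^ ((2:ℝ)/l)))
      = (l:ℝ)/2 * ((l*k).factorial : ℝ) := by
    rw [← integral_comp_rpow_Ioi (fun y : ℝ => y ^ s * Real.exp (-(y ^ ((2:ℝ)/l)))) hp]
    have hGamma : Real.Gamma ((l*k : ℕ) + 1) = ((l*k).factorial : ℝ) :=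
      Real.Gamma_nat_eq_factorial (l*k)
    rw [Real.Gamma_eq_integral (by positivity : (0:ℝ) < (l*k : ℕ) + 1)] at hGamma
    rw [← hGamma, ← integral_const_mul]
    apply setIntegral_congr_fun measurableSet_Ioi
    intro x hx
    have hx : (0:ℝ) < x := hx
    dsimp only
    have e1 : (x ^ ((l:ℝ)/2)) ^ s = x ^ (((l:ℝ)/2) * s) := by
      rw [← Real.rpow_mul hx.le]
    have e2 : (x ^ ((l:ℝ)/2)) ^ ((2:ℝ)/l) = x := by
      rw [← Real.rpow_mul hx.le]
      rw [div_mul_div_comm]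
      rw [show (l:ℝ) * 2 / (2 * l) = 1 by field_simp]
      exact Real.rpow_one x
    rw [e1, e2]
    have e3 : |(l:ℝ)/2| = (l:ℝ)/2 := abs_of_pos (by positivity)
    rw [e3, smul_eq_mul]
    have e4 : x ^ ((l:ℝ)/2 - 1) * x ^ (((l:ℝ)/2) * s) = x ^ (((l*k : ℕ) : ℝ) + 1 - 1) := by
      rw [← Real.rpow_add hx]
      congr 1
      rw [hsdef]
      push_cast
      field_simp
      ring
    calc (l:ℝ)/2 * x ^ ((l:ℝ)/2 - 1) * (x ^ (((l:ℝ)/2) * s) * Real.exp (-x))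
        = (l:ℝ)/2 * (x ^ ((l:ℝ)/2 - 1) * x ^ (((l:ℝ)/2) * s) * Real.exp (-x)) := by ring
      _ = (l:ℝ)/2 * (Real.exp (-x) * x ^ (((l*k : ℕ) : ℝ) + 1 - 1)) := by rw [e4]; ring
  rw [step3]
  field_simp
  ring


/-- The complex moments of the Kotz-like density
`f(z) = (l!)²/(lπ) · exp(−|l! z|^{2/l}) · |l! z|^{2(1/l − 1)}` on `ℂ`:
`∫ z^{k₁} z̄^{k₂} f(z) dA(z) = δ_{k₁=k₂} · (l k₁)!/(l!)^{2k₁}`. -/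
theorem kotz_like_moments (l : ℕ) (hl : 0 < l) (k₁ k₂ : ℕ) :
    (∫ z : ℂ, z ^ k₁ * (starRingEnd ℂ z) ^ k₂ *
        (((l.factorial : ℝ) ^ 2 / (l * π) *
          Real.exp (-(‖(l.factorial : ℂ) * z‖ ^ ((2 : ℝ) / l))) *
          ‖(l.factorial : ℂ) * z‖ ^ (2 * ((1 : ℝ) / l - 1)) : ℝ) : ℂ)) =
      if k₁ = k₂ then ((l * k₁).factorial : ℂ) / (l.factorial : ℂ) ^ (2 * k₁) else 0 := by
  have hc : (0:ℝ) < (l.factorial : ℝ) := by positivity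
  have hl' : (0:ℝ) < l := by positivity
  set c : ℝ := (l.factorial : ℝ) with hcdef
  set gR : ℝ → ℝ := fun r => c ^ 2 / (l * π) *
      (r ^ (k₁+k₂+1) * Real.exp (-((c*r) ^ ((2:ℝ)/l))) * (c*r) ^ (2*((1:ℝ)/l - 1))) with hgR
  set f₁ : ℝ → ℂ := fun r => ((gR r : ℝ) : ℂ) with hf₁
  set f₂ : ℝ → ℂ := fun θ => Complex.exp (((k₁:ℂ) - (k₂:ℂ)) * (θ:ℂ) * Complex.I) with hf₂
  rw [← Complex.integral_comp_polarCoord_symm]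
  rw [show polarCoord.target = Ioi (0:ℝ) ×ˢ Ioo (-π) π from rfl]
  have hcongr : EqOn
      (fun p : ℝ × ℝ => p.1 • (Complex.polarCoord.symm p ^ k₁ *
        (starRingEnd ℂ (Complex.polarCoord.symm p)) ^ k₂ *
        ((c ^ 2 / (l * π) *
          Real.exp (-(‖(l.factorial : ℂ) * Complex.polarCoord.symm p‖ ^ ((2 : ℝ) / l))) *
          ‖(l.factorial : ℂ) * Complex.polarCoord.symm p‖ ^ (2 * ((1 : ℝ) / l - 1)) : ℝ) : ℂ)))
      (fun p : ℝ × ℝ => f₁ p.1 * f₂ p.2) (Ioi (0:ℝ) ×ˢ Ioo (-π) π) := by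
    rintro ⟨r, θ⟩ ⟨hr, hθ⟩
    have hr : (0:ℝ) < r := hr
    have hz : Complex.polarCoord.symm (r, θ) = (r:ℂ) * Complex.exp ((θ:ℂ) * Complex.I) := by
      rw [Complex.polarCoord_symm_apply, Complex.exp_mul_I]
      push_cast
      ring
    have habs : ‖(l.factorial : ℂ) * ((r:ℂ) * Complex.exp ((θ:ℂ) * Complex.I))‖
        = c * r := by
      rw [norm_mul, norm_mul, Complex.norm_exp_ofReal_mul_I]
      simp [Complex.norm_real, abs_of_pos hr, hcdef]
    have hconj : (starRingEnd ℂ) ((r:ℂ) * Complex.exp ((θ:ℂ) * Complex.I))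
        = (r:ℂ) * Complex.exp (-((θ:ℂ) * Complex.I)) := by
      rw [map_mul, Complex.conj_ofReal, ← Complex.exp_conj]
      congr 1
      simp [map_mul, Complex.conj_ofReal, Complex.conj_I]
    simp only
    rw [hz, habs, hconj, hf₁, hf₂, hgR]
    beta_reduce
    rw [Complex.real_smul, mul_pow, mul_pow, ← Complex.exp_nat_mul, ← Complex.exp_nat_mul,
      mul_mul_mul_comm, ← Complex.exp_add,
      show (k₁:ℂ) * ((θ:ℂ) * Complex.I) + (k₂:ℂ) * -((θ:ℂ) * Complex.I)
        = ((k₁:ℂ) - (k₂:ℂ)) * (θ:ℂ) * Complex.I by ring]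
    push_cast
    ring
  rw [setIntegral_congr_fun (measurableSet_Ioi.prod measurableSet_Ioo) hcongr]
  rw [Measure.volume_eq_prod, setIntegral_prod_mul]
  have hang : (∫ θ in Ioo (-π) π, f₂ θ) = if k₁ = k₂ then ((2*π : ℝ) : ℂ) else 0 := by
    rw [hf₂]
    by_cases h : k₁ = k₂
    · subst h
      rw [if_pos rfl]
      simp only [sub_self, zero_mul, Complex.exp_zero]
      rw [setIntegral_const, measureReal_def, Real.volume_Ioo,
        ENNReal.toReal_ofReal (by linarith [Real.pi_pos] : (0:ℝ) ≤ π - -π),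
        Complex.real_smul]
      push_cast
      ring
    · rw [if_neg h]
      have hn : ((k₁:ℂ) - (k₂:ℂ)) ≠ 0 := sub_ne_zero.mpr (by exact_mod_cast h)
      have hnI : ((k₁:ℂ) - (k₂:ℂ)) * Complex.I ≠ 0 := mul_ne_zero hn Complex.I_ne_zero
      have hm : ((k₁:ℂ) - (k₂:ℂ)) = (((k₁:ℤ) - (k₂:ℤ) : ℤ) : ℂ) := by push_cast; ring
      have step : (∫ θ in Ioo (-π) π, Complex.exp (((k₁:ℂ) - (k₂:ℂ)) * (θ:ℂ) * Complex.I))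
          = ∫ θ in (-π)..π, Complex.exp ((((k₁:ℂ) - (k₂:ℂ)) * Complex.I) * (θ:ℂ)) := by
        rw [intervalIntegral.integral_of_le (by linarith [Real.pi_pos] : -π ≤ π),
          integral_Ioc_eq_integral_Ioo]
        congr 1
        funext θ
        congr 1
        ring
      rw [step, integral_exp_mul_complex hnI]
      rw [show (((k₁:ℂ) - (k₂:ℂ)) * Complex.I) * (π:ℂ)
            = (((k₁:ℤ) - (k₂:ℤ) : ℤ) : ℂ) * ((π:ℂ) * Complex.I) by rw [← hm]; ring,
          show (((k₁:ℂ) - (k₂:ℂ)) * Complex.I) * ((-π : ℝ):ℂ)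
            = (((k₁:ℤ) - (k₂:ℤ) : ℤ) : ℂ) * (-((π:ℂ) * Complex.I)) by rw [← hm]; push_cast; ring,
          Complex.exp_int_mul, Complex.exp_int_mul, Complex.exp_neg, Complex.exp_pi_mul_I,
          show ((-1:ℂ))⁻¹ = -1 by norm_num]
      simp
  rw [hang]
  by_cases h : k₁ = k₂
  · subst h
    rw [if_pos rfl, if_pos rfl]
    have hrad : (∫ r in Ioi (0:ℝ), f₁ r) =
        ((c ^ 2 / (l * π) * ((l : ℝ)/2 * (l*k₁).factorial / c ^ (2*k₁+2)) : ℝ) : ℂ) := by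
      rw [hf₁]
      beta_reduce
      rw [show (∫ r in Ioi (0:ℝ), ((gR r : ℝ) : ℂ)) = ((∫ r in Ioi (0:ℝ), gR r : ℝ) : ℂ) from
        integral_ofReal]
      norm_cast
      rw [hgR]
      simp only []
      rw [integral_const_mul]
      congr 1
      rw [show k₁ + k₁ + 1 = 2*k₁+1 by ring]
      exact kotz_radial l k₁ hl
    rw [hrad]
    have hπ : π ≠ 0 := Real.pi_ne_zero
    have hcC : (l.factorial : ℂ) ≠ 0 := Nat.cast_ne_zero.mpr (Nat.factorial_pos l).ne'
    have hlC : (l : ℂ) ≠ 0 := by exact_mod_cast hl'.ne'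
    have hπC : (π : ℂ) ≠ 0 := by exact_mod_cast hπ
    rw [hcdef]
    push_cast
    field_simp
    ring
  · rw [if_neg h, if_neg h, mul_zero]
end

section
/- The two-sided Laplace transform identity ∫_{−∞}^{∞} e^{−sr}/cosh(r) dr = π/cos(πs/2) holds for all complex s with |Re(s)| < 1. -/
open MeasureTheory Real

noncomputable def lsF (r : ℝ) : ℝ := Real.exp (2*r) / (1 + Real.exp (2*r))
noncomputable def lsF' (r : ℝ) : ℝ := 2 * Real.exp (2*r) / (1 + Real.exp (2*r))^2

lemma lsF_hasDeriv (r : ℝ) : HasDerivAt lsF (lsF' r) r := by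
  have h1 : HasDerivAt (fun r : ℝ => Real.exp (2*r)) (2 * Real.exp (2*r)) r := by
    simpa [Function.comp_def, mul_comm] using (Real.hasDerivAt_exp (2*r)).comp r ((hasDerivAt_id r).const_mul 2)
  have h2 : HasDerivAt (fun r : ℝ => 1 + Real.exp (2*r)) (2 * Real.exp (2*r)) r :=
    (h1.const_add 1)
  have hne : (1 + Real.exp (2*r)) ≠ 0 := by positivity
  have := h1.div h2 hne
  refine this.congr_deriv ?_
  unfold lsF'
  field_simp
  ring

lemma lsF_pos (r : ℝ) : 0 < lsF r := by unfold lsF; positivity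

lemma lsF_lt_one (r : ℝ) : lsF r < 1 := by
  unfold lsF
  rw [div_lt_one (by positivity)]
  linarith

lemma lsF_inj : Function.Injective lsF := by
  intro x y h
  unfold lsF at h
  have hx : (1 + Real.exp (2*x)) ≠ 0 := by positivity
  have hy : (1 + Real.exp (2*y)) ≠ 0 := by positivity
  field_simp at h
  have : Real.exp (2*x) = Real.exp (2*y) := by nlinarith
  have := Real.exp_injective this
  linarith

lemma lsF_image : lsF '' Set.univ = Set.Ioo 0 1 := by
  ext t
  simp only [Set.image_univ, Set.mem_range, Set.mem_Ioo]
  constructor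
  · rintro ⟨r, rfl⟩; exact ⟨lsF_pos r, lsF_lt_one r⟩
  · rintro ⟨h0, h1⟩
    refine ⟨(1/2) * Real.log (t / (1-t)), ?_⟩
    unfold lsF
    have hd : (0:ℝ) < 1 - t := by linarith
    rw [show 2 * ((1/2) * Real.log (t / (1-t))) = Real.log (t/(1-t)) by ring,
      Real.exp_log (div_pos h0 hd)]
    field_simp
    ring

lemma lsF'_pos (r : ℝ) : 0 < lsF' r := by unfold lsF'; positivity

lemma ls_key (s : ℂ) (r : ℝ) :
    |lsF' r| • (((lsF r : ℝ) : ℂ) ^ ((1-s)/2 - 1) * (1 - ((lsF r : ℝ) : ℂ)) ^ ((1 - (1-s)/2) - 1))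
      = Complex.exp (-s * r) / Complex.cosh r := by
  set E := Real.exp (2*r) with hE
  set L := Real.log (1 + E) with hL
  have hEpos : (0:ℝ) < 1 + E := by positivity
  have h1mf : (1 : ℝ) - lsF r = 1/(1+E) := by unfold lsF; field_simp; rw [hE]; ring
  have hlog1 : Real.log (lsF r) = 2*r - L := by
    unfold lsF; rw [Real.log_div (Real.exp_ne_zero _) hEpos.ne', Real.log_exp]
  have hlog2 : Real.log (1 - lsF r) = -L := by
    rw [h1mf, one_div, Real.log_inv]
  have c1 : ((lsF r : ℝ) : ℂ) ^ ((1-s)/2 - 1)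
      = Complex.exp (((1-s)/2 - 1) * ((2*r : ℝ) - (L : ℝ))) := by
    rw [Complex.cpow_def_of_ne_zero (by exact_mod_cast (lsF_pos r).ne'),
      ← Complex.ofReal_log (lsF_pos r).le, hlog1]
    push_cast; ring_nf
  have c2 : (1 - ((lsF r : ℝ) : ℂ)) ^ ((1 - (1-s)/2) - 1)
      = Complex.exp (((1 - (1-s)/2) - 1) * (-(L : ℝ))) := by
    rw [show (1 - ((lsF r : ℝ) : ℂ)) = ((1 - lsF r : ℝ) : ℂ) by push_cast; ring,
      Complex.cpow_def_of_ne_zero (by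
        rw [Complex.ofReal_ne_zero, h1mf]; positivity),
      ← Complex.ofReal_log (by rw [h1mf]; positivity), hlog2]
    push_cast; ring_nf
  rw [c1, c2, ← Complex.exp_add,
    show ((1-s)/2 - 1) * ((2*r : ℝ) - (L : ℝ)) + ((1 - (1-s)/2) - 1) * (-(L : ℝ))
      = -s * r + (-(r:ℂ) + L) by push_cast; ring,
    Complex.exp_add, Complex.exp_add, abs_of_pos (lsF'_pos r)]
  rw [Complex.real_smul, show (-(r:ℂ)) = ((-r : ℝ) : ℂ) by push_cast; ring,
    ← Complex.ofReal_exp, ← Complex.ofReal_exp, Real.exp_log hEpos]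
  rw [← Complex.ofReal_cosh]
  have hcosh : Real.cosh r ≠ 0 := (Real.cosh_pos r).ne'
  have hreal : lsF' r * (Real.exp (-r) * (1 + E)) = 1 / Real.cosh r := by
    unfold lsF'
    rw [Real.cosh_eq, Real.exp_neg]
    have h2 : E = Real.exp r * Real.exp r := by rw [hE, ← Real.exp_add]; ring_nf
    field_simp [Real.exp_ne_zero]
    nlinarith [Real.exp_pos r, Real.exp_pos (2*r)]
  calc (↑(lsF' r) : ℂ) * (Complex.exp (-s*r) * (↑(Real.exp (-r)) * ↑((1:ℝ)+E)))
      = (↑(lsF' r * (Real.exp (-r) * (1 + E))) : ℂ) * Complex.exp (-s*r) := by push_cast; ring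
    _ = Complex.exp (-s * r) / (Real.cosh r : ℂ) := by rw [hreal]; push_cast; ring

/-- The two-sided Laplace transform of the hyperbolic secant:
`∫ e^{−sr}/cosh(r) dr = π/cos(πs/2)` for `|Re(s)| < 1`. -/
theorem laplace_sech (s : ℂ) (hs : |s.re| < 1) :
    ∫ r : ℝ, Complex.exp (-s * r) / Complex.cosh r =
      (Real.pi : ℂ) / Complex.cos (Real.pi * s / 2) := by
  obtain ⟨hs1, hs2⟩ := abs_lt.mp hs
  have hure : ((1-s)/2 : ℂ).re = (1 - s.re)/2 := by
    simp [Complex.div_re, Complex.sub_re, Complex.normSq]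
  have hvre : ((1-(1-s)/2) : ℂ).re = (1 + s.re)/2 := by
    simp [Complex.div_re, Complex.sub_re, Complex.normSq]; ring
  have hu : 0 < ((1-s)/2 : ℂ).re := by rw [hure]; linarith
  have hv : 0 < ((1-(1-s)/2) : ℂ).re := by rw [hvre]; linarith
  set g : ℝ → ℂ := fun t =>
    ((t : ℝ) : ℂ) ^ ((1-s)/2 - 1) * (1 - ((t : ℝ) : ℂ)) ^ ((1 - (1-s)/2) - 1) with hg
  calc ∫ r : ℝ, Complex.exp (-s * r) / Complex.cosh r
      = ∫ r : ℝ, |lsF' r| • g (lsF r) := by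
        simp_rw [hg, ls_key s]
    _ = ∫ r in Set.univ, |lsF' r| • g (lsF r) := setIntegral_univ.symm
    _ = ∫ t in lsF '' Set.univ, g t :=
        (integral_image_eq_integral_abs_deriv_smul MeasurableSet.univ
          (fun x _ => (lsF_hasDeriv x).hasDerivWithinAt) lsF_inj.injOn g).symm
    _ = ∫ t in Set.Ioo 0 1, g t := by rw [lsF_image]
    _ = Complex.betaIntegral ((1-s)/2) (1-(1-s)/2) := by
        rw [Complex.betaIntegral, intervalIntegral.integral_of_le zero_le_one,
          integral_Ioc_eq_integral_Ioo]
    _ = Complex.Gamma ((1-s)/2) * Complex.Gamma (1-(1-s)/2) := by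
        have h := Complex.Gamma_mul_Gamma_eq_betaIntegral hu hv
        rw [show ((1-s)/2 : ℂ) + (1-(1-s)/2) = 1 by ring, Complex.Gamma_one, one_mul] at h
        exact h.symm
    _ = (Real.pi : ℂ) / Complex.sin (Real.pi * ((1-s)/2)) :=
        Complex.Gamma_mul_Gamma_one_sub _
    _ = (Real.pi : ℂ) / Complex.cos (Real.pi * s / 2) := by
        rw [show (Real.pi : ℂ) * ((1-s)/2) = Real.pi/2 - Real.pi * s/2 by ring,
          Complex.sin_pi_div_two_sub]
end
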